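/- For all integers 0 ≤ j < d, define H^d_j(x) = Σ_{i=0}^{j} C(j,i)·C(x+d−1−i, d−1) ∈ ℚ[x]. Then (−1)^{d−1}·H^d_j(x) = H^d_j(−d+j−x) as polynomials. -/

import Mathlib

open Polynomial

/-- The binomial coefficient polynomial `C(x + c, r) = (x+c)(x+c-1)⋯(x+c-r+1)/r!`. -/
noncomputable def binomPoly (c r : ℕ) : Polynomial ℚ :=
  Polynomial.C (1 / (r.factorial : ℚ)) *
    ∏ l ∈ Finset.range r, (Polynomial.X + Polynomial.C ((c : ℚ) - l))

/-- `H^d_j(x) = ∑_{i=0}^{j} C(j,i)·C(x + d - 1 - i, d - 1)`. -/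
noncomputable def Hdj (d j : ℕ) : Polynomial ℚ :=
  ∑ i ∈ Finset.range (j + 1), Polynomial.C ((j.choose i : ℚ)) * binomPoly (d - 1 - i) (d - 1)

/-!
Reflection `x ↦ r - 1 - c - c' - x` negates each of the `r` linear factors of `C(x + c, r)` and
reverses their order, turning it into `(-1)^r C(x + c', r)`.  Applied with `r = d - 1`,
`c = d - 1 - i`, `c' = d - 1 - (j - i)`, this sends the `i`-th summand of `H^d_j` to
`(-1)^(d-1)` times the `(j - i)`-th one, since `C(j, i) = C(j, j - i)`.
-/

theorem binomPoly_comp_sub_X (c c' r : ℕ) :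
    (binomPoly c r).comp (C ((r : ℚ) - 1 - c - c') - X)
      = C ((-1 : ℚ) ^ r) * binomPoly c' r := by
  have factor : ∀ l ∈ Finset.range r,
      (X + C ((c : ℚ) - l)).comp (C ((r : ℚ) - 1 - c - c') - X)
        = C (-1 : ℚ) * (X + C ((c' : ℚ) - ((r - 1 - l : ℕ) : ℚ))) := by
    intro l hl
    have hl : l < r := Finset.mem_range.mp hl
    rw [Nat.cast_sub (by omega), Nat.cast_sub (by omega), add_comp, X_comp, C_comp]
    simp only [Nat.cast_one, map_sub, map_neg, map_one, map_natCast]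
    ring
  unfold binomPoly
  rw [mul_comp, C_comp, prod_comp, Finset.prod_congr rfl factor, Finset.prod_mul_distrib,
    Finset.prod_const, Finset.card_range, ← map_pow,
    Finset.prod_range_reflect (fun l => X + C ((c' : ℚ) - l)) r]
  ring

theorem Hdj_symmetry (d j : ℕ) (h : j < d) :
    Polynomial.C ((-1 : ℚ) ^ (d - 1)) * Hdj d j
      = (Hdj d j).comp (Polynomial.C ((j : ℚ) - d) - Polynomial.X) := by
  unfold Hdj
  conv_lhs => rw [← Finset.sum_range_reflect, Finset.mul_sum]
  rw [sum_comp]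
  refine Finset.sum_congr rfl fun i hi => ?_
  have hij : i ≤ j := Nat.lt_succ_iff.mp (Finset.mem_range.mp hi)
  have shift : (j : ℚ) - d = ((d - 1 : ℕ) : ℚ) - 1 - ((d - 1 - i : ℕ) : ℚ)
      - ((d - 1 - (j - i) : ℕ) : ℚ) := by
    have hsum : j + (d - 1 - i) + (d - 1 - (j - i)) + 1 = (d - 1) + d := by omega
    have hsumℚ : (j : ℚ) + ((d - 1 - i : ℕ) : ℚ) + ((d - 1 - (j - i) : ℕ) : ℚ) + 1
        = ((d - 1 : ℕ) : ℚ) + d := by exact_mod_cast hsum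
    linarith
  rw [mul_comp, C_comp, shift, binomPoly_comp_sub_X, Nat.add_sub_cancel, Nat.choose_symm hij]
  ring
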